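/- arXiv:1709.06337 — 3 statements merged into one kernel-verified Lean document; each statement's English description precedes it below -/
import Mathlib

section
/- Let P be an integer, and set A = P² + 2 and B = P² + 1. For every positive integer n with n > (|A| + |B|)³, if σ₂(n) − n² = A·n + B (as integers), then there exists an integer k ≥ 0 such that n = U_{2k}(P,−1) · U_{2k+2}(P,−1), where both U_{2k}(P,−1) and U_{2k+2}(P,−1) are prime numbers. -/
/-- Lucas sequence of the first kind: `U 0 = 0`, `U 1 = 1`,
`U (n+2) = P * U (n+1) - Q * U n`. -/
def lucasU (P Q : ℤ) : ℕ → ℤ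
  | 0 => 0
  | 1 => 1
  | n + 2 => P * lucasU P Q (n + 1) - Q * lucasU P Q n

lemma lucasU_neg (P : ℤ) (n : ℕ) :
    lucasU (-P) (-1) n = (-1) ^ (n + 1) * lucasU P (-1) n := by
  induction n using Nat.twoStepInduction with
  | zero => simp [lucasU]
  | one => simp [lucasU]
  | more n ih1 ih2 => simp only [lucasU, ih1, ih2]; ring

lemma lucasU_rec4 (P : ℤ) (k : ℕ) :
    lucasU P (-1) (k + 4) = (P ^ 2 + 2) * lucasU P (-1) (k + 2) - lucasU P (-1) k := by
  show lucasU P (-1) (k + 2 + 2) = _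
  simp only [lucasU]
  ring

lemma descent (Q : ℤ) (hQ : 1 ≤ Q) : ∀ b a : ℕ, a ≤ b →
    (a : ℤ) ^ 2 + (b : ℤ) ^ 2 - (Q ^ 2 + 2) * a * b = Q ^ 2 →
    ∃ k : ℕ, (a : ℤ) = lucasU Q (-1) (2 * k) ∧ (b : ℤ) = lucasU Q (-1) (2 * k + 2) := by
  intro b
  induction b using Nat.strong_induction_on with
  | _ b ih =>
    intro a hab heq
    rcases Nat.eq_zero_or_pos a with ha0 | ha1
    · subst ha0
      have hb : (b : ℤ) = Q := by
        have h1 : (b : ℤ) ^ 2 = Q ^ 2 := by push_cast at heq ⊢; linarith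
        have hb0 : (0 : ℤ) ≤ b := Int.natCast_nonneg b
        nlinarith
      exact ⟨0, by simp [lucasU], by simp [lucasU]; linarith [hb]⟩
    · have hQ2 : (1 : ℤ) ≤ Q ^ 2 := by nlinarith
      have haposZ : (1 : ℤ) ≤ (a : ℤ) := by exact_mod_cast ha1
      have hltb : a < b := by
        rcases lt_or_eq_of_le hab with h | h
        · exact h
        · exfalso; subst h; nlinarith
      have hbZ : (a : ℤ) + 1 ≤ (b : ℤ) := by exact_mod_cast hltb
      set a' : ℤ := (Q ^ 2 + 2) * a - b with ha'
      have hprod : a' * b = (a : ℤ) ^ 2 - Q ^ 2 := by rw [ha']; ring_nf; linarith [heq]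
      have ha'nonneg : 0 ≤ a' := by
        by_contra hneg
        push_neg at hneg
        have h1 : a' ≤ -1 := by omega
        have hb2 : (Q ^ 2 + 2) * a + 1 ≤ (b : ℤ) := by rw [ha'] at h1; linarith
        nlinarith
      have ha'lt : a' < a := by nlinarith
      obtain ⟨c, hc⟩ : ∃ c : ℕ, (c : ℤ) = a' := ⟨a'.toNat, Int.toNat_of_nonneg ha'nonneg⟩
      have hcle : c ≤ a := by omega
      have heq' : (c : ℤ) ^ 2 + (a : ℤ) ^ 2 - (Q ^ 2 + 2) * c * a = Q ^ 2 := by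
        rw [hc]; nlinarith [hprod]
      obtain ⟨k, hk1, hk2⟩ := ih a hltb c hcle heq'
      refine ⟨k + 1, ?_, ?_⟩
      · rw [show 2 * (k + 1) = 2 * k + 2 by ring]; exact hk2
      · rw [show 2 * (k + 1) + 2 = 2 * k + 4 by ring, lucasU_rec4, ← hk1, ← hk2]
        rw [ha'] at hc; linarith [hc]

theorem stmt_1 (P : ℤ) (A B : ℤ) (hA : A = P ^ 2 + 2) (hB : B = P ^ 2 + 1)
    (n : ℕ) (hn : 0 < n) (hbig : (n : ℤ) > (|A| + |B|) ^ 3)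
    (heq : ((ArithmeticFunction.sigma 2) n : ℤ) - (n : ℤ) ^ 2 = A * n + B) :
    ∃ k : ℕ,
      (n : ℤ) = lucasU P (-1) (2 * k) * lucasU P (-1) (2 * k + 2) ∧
      Prime (lucasU P (-1) (2 * k)) ∧ Prime (lucasU P (-1) (2 * k + 2)) := by
  have hP2 : (0 : ℤ) ≤ P ^ 2 := sq_nonneg P
  have habsA : |A| = A := abs_of_pos (by rw [hA]; linarith)
  have habsB : |B| = B := abs_of_pos (by rw [hB]; linarith)
  rw [habsA, habsB] at hbig
  have hC : A + B = 2 * P ^ 2 + 3 := by rw [hA, hB]; ring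
  have hC3 : (3 : ℤ) ≤ A + B := by rw [hC]; linarith
  have hn27 : (27 : ℤ) < (n : ℤ) := by
    have h27 : (3 : ℤ) ^ 3 ≤ (A + B) ^ 3 := pow_le_pow_left₀ (by norm_num) hC3 3
    norm_num at h27; linarith
  have hnbig : 27 < n := by exact_mod_cast hn27
  have hn1 : n ≠ 1 := by omega
  set p := n.minFac with hpdef
  have hp : p.Prime := Nat.minFac_prime hn1
  have hpdvd : p ∣ n := Nat.minFac_dvd n
  obtain ⟨m, hnm⟩ : ∃ m, n = p * m := hpdvd
  have hm0 : m ≠ 0 := by rintro rfl; omega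
  have hmdvd : m ∣ n := ⟨p, by rw [hnm]; ring⟩
  have hmltn : m < n := by
    have := hp.two_le
    calc m < 2 * m := by omega
    _ ≤ p * m := by exact Nat.mul_le_mul_right m this
    _ = n := hnm.symm
  -- sigma at a prime
  have hsigp : ∀ q : ℕ, q.Prime → (ArithmeticFunction.sigma 2) q = 1 + q ^ 2 := by
    intro q hq
    rw [ArithmeticFunction.sigma_apply, hq.divisors]
    simp [Finset.sum_pair hq.one_lt.ne]
  -- m ≠ 1 (n is not prime)
  have hm1 : m ≠ 1 := by
    rintro rfl
    rw [mul_one] at hnm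
    have hnp : n.Prime := hnm ▸ hp
    rw [hsigp n hnp] at heq
    push_cast at heq
    nlinarith
  -- m^2 ≤ A n + B
  have hm2 : (m : ℤ) ^ 2 ≤ A * n + B := by
    have hsub : ({m, n} : Finset ℕ) ⊆ n.divisors := by
      intro x hx
      simp only [Finset.mem_insert, Finset.mem_singleton] at hx
      rcases hx with rfl | rfl
      · exact Nat.mem_divisors.mpr ⟨hmdvd, by omega⟩
      · exact Nat.mem_divisors.mpr ⟨dvd_rfl, by omega⟩
    have hsum : m ^ 2 + n ^ 2 ≤ (ArithmeticFunction.sigma 2) n := by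
      rw [ArithmeticFunction.sigma_apply]
      calc m ^ 2 + n ^ 2 = ∑ d ∈ ({m, n} : Finset ℕ), d ^ 2 := by
            rw [Finset.sum_pair (by omega : m ≠ n)]
        _ ≤ _ := Finset.sum_le_sum_of_subset hsub
    have : ((m : ℤ)) ^ 2 + (n : ℤ) ^ 2 ≤ ((ArithmeticFunction.sigma 2) n : ℤ) := by
      exact_mod_cast hsum
    linarith
  -- m is prime
  have hmprime : m.Prime := by
    by_contra hnot
    -- then p^3 ≤ n
    have hr : m.minFac.Prime := Nat.minFac_prime hm1
    obtain ⟨s, hms⟩ : ∃ s, m = m.minFac * s := Nat.minFac_dvd m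
    have hs0 : s ≠ 0 := by rintro rfl; simp at hms; exact hm0 hms
    have hs1 : s ≠ 1 := by rintro rfl; rw [mul_one] at hms; exact hnot (hms ▸ hr)
    have hpr : p ≤ m.minFac := Nat.minFac_le_of_dvd hr.two_le ((Nat.minFac_dvd m).trans hmdvd)
    have hps : p ≤ s := by
      have hsdvd : s ∣ n := (Dvd.intro_left m.minFac hms.symm).trans hmdvd
      have hsp : s.minFac.Prime := Nat.minFac_prime hs1
      calc p ≤ s.minFac := Nat.minFac_le_of_dvd hsp.two_le ((Nat.minFac_dvd s).trans hsdvd)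
        _ ≤ s := Nat.minFac_le (by omega)
    have hp3 : p ^ 3 ≤ n := by
      calc p ^ 3 = p * (p * p) := by ring
        _ ≤ p * (m.minFac * s) := by
            exact Nat.mul_le_mul_left p (Nat.mul_le_mul hpr hps)
        _ = n := by rw [← hms, ← hnm]
    -- contradiction
    have hp3Z : (p : ℤ) ^ 3 ≤ (n : ℤ) := by exact_mod_cast hp3
    have hnmZ : (n : ℤ) = (p : ℤ) * m := by exact_mod_cast hnm
    have hmpos : (1 : ℤ) ≤ (m : ℤ) := by exact_mod_cast Nat.one_le_iff_ne_zero.mpr hm0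
    have hppos : (1 : ℤ) ≤ (p : ℤ) := by exact_mod_cast hp.one_lt.le
    have hnpos : (0 : ℤ) < (n : ℤ) := by exact_mod_cast hn
    have hn2m3 : (n : ℤ) ^ 2 ≤ (m : ℤ) ^ 3 := by
      have h2 : (p : ℤ) ^ 3 * (m : ℤ) ^ 3 ≤ (n : ℤ) * (m : ℤ) ^ 3 :=
        mul_le_mul_of_nonneg_right hp3Z (by positivity)
      have h3 : (n : ℤ) * (n : ℤ) ^ 2 ≤ (n : ℤ) * (m : ℤ) ^ 3 := by
        calc (n : ℤ) * (n : ℤ) ^ 2 = (p : ℤ) ^ 3 * (m : ℤ) ^ 3 := by rw [hnmZ]; ring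
          _ ≤ _ := h2
      exact le_of_mul_le_mul_left h3 hnpos
    have hCn : (m : ℤ) ^ 2 ≤ (A + B) * n := by nlinarith
    have h6 : (m : ℤ) ^ 6 ≤ ((A + B) * n) ^ 3 := by
      calc (m : ℤ) ^ 6 = ((m : ℤ) ^ 2) ^ 3 := by ring
        _ ≤ ((A + B) * n) ^ 3 := pow_le_pow_left₀ (sq_nonneg _) hCn 3
    have h4 : (n : ℤ) ^ 4 ≤ (m : ℤ) ^ 6 := by
      calc (n : ℤ) ^ 4 = ((n : ℤ) ^ 2) ^ 2 := by ring
        _ ≤ ((m : ℤ) ^ 3) ^ 2 := pow_le_pow_left₀ (sq_nonneg _) hn2m3 2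
        _ = (m : ℤ) ^ 6 := by ring
    have hlt : ((A + B) * n) ^ 3 < (n : ℤ) ^ 4 := by
      have h := mul_lt_mul_of_pos_right hbig (pow_pos hnpos 3)
      calc ((A + B) * n) ^ 3 = (A + B) ^ 3 * (n : ℤ) ^ 3 := by ring
        _ < (n : ℤ) * (n : ℤ) ^ 3 := h
        _ = (n : ℤ) ^ 4 := by ring
    linarith
  -- case p = m is impossible
  have hne : p ≠ m := by
    intro hpm
    have hnp2 : n = p ^ 2 := by rw [hnm, ← hpm]; ring
    have hsig : (ArithmeticFunction.sigma 2) n = 1 + p ^ 2 + p ^ 4 := by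
      rw [hnp2, ArithmeticFunction.sigma_apply, Nat.sum_divisors_prime_pow hp]
      simp [Finset.sum_range_succ]
      ring
    rw [hsig, hnp2] at heq
    push_cast at heq
    have hppos : (2 : ℤ) ≤ (p : ℤ) := by exact_mod_cast hp.two_le
    rw [hA, hB] at heq
    nlinarith
  -- hence the key quadratic equation
  have hcop : Nat.Coprime p m := (Nat.coprime_primes hp hmprime).mpr hne
  have hsign : (ArithmeticFunction.sigma 2) n = (1 + p ^ 2) * (1 + m ^ 2) := by
    rw [hnm, ArithmeticFunction.isMultiplicative_sigma.map_mul_of_coprime hcop,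
      hsigp p hp, hsigp m hmprime]
  rw [hsign, hnm] at heq
  push_cast at heq
  rw [hA, hB] at heq
  have hkey : (p : ℤ) ^ 2 + (m : ℤ) ^ 2 - (P ^ 2 + 2) * p * m = P ^ 2 := by
    linear_combination heq
  -- P ≠ 0
  have hP0 : P ≠ 0 := by
    rintro rfl
    have h0 : ((p : ℤ) - m) ^ 2 = 0 := by linear_combination hkey
    have h2 : (p : ℤ) - m = 0 := by
      exact pow_eq_zero_iff (by norm_num : 2 ≠ 0) |>.mp h0
    have hpm : (p : ℤ) = m := by linarith
    exact hne (by exact_mod_cast hpm)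
  have hple : p ≤ m := Nat.minFac_le_of_dvd hmprime.two_le hmdvd
  have hQ1 : (1 : ℤ) ≤ |P| := abs_pos.mpr hP0
  have hkey' : (p : ℤ) ^ 2 + (m : ℤ) ^ 2 - (|P| ^ 2 + 2) * p * m = |P| ^ 2 := by
    rw [sq_abs]; exact hkey
  obtain ⟨k, hk1, hk2⟩ := descent |P| hQ1 m p hple hkey'
  have hpZ : Prime ((p : ℤ)) := Nat.prime_iff_prime_int.mp hp
  have hmZ : Prime ((m : ℤ)) := Nat.prime_iff_prime_int.mp hmprime
  rcases abs_choice P with habs | habs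
  · rw [habs] at hk1 hk2
    refine ⟨k, ?_, ?_, ?_⟩
    · rw [← hk1, ← hk2]; exact_mod_cast hnm
    · rw [← hk1]; exact hpZ
    · rw [← hk2]; exact hmZ
  · rw [habs] at hk1 hk2
    rw [lucasU_neg P (2 * k)] at hk1
    rw [lucasU_neg P (2 * k + 2)] at hk2
    have e1 : lucasU P (-1) (2 * k) = -(p : ℤ) := by
      have : (-1 : ℤ) ^ (2 * k + 1) = -1 := by
        rw [pow_succ, pow_mul]; simp
      rw [this] at hk1; linarith
    have e2 : lucasU P (-1) (2 * k + 2) = -(m : ℤ) := by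
      have : (-1 : ℤ) ^ (2 * k + 2 + 1) = -1 := by
        rw [show 2 * k + 2 + 1 = 2 * (k + 1) + 1 by ring, pow_succ, pow_mul]; simp
      rw [this] at hk2; linarith
    refine ⟨k, ?_, ?_, ?_⟩
    · rw [e1, e2]; push_cast [hnm]; ring
    · rw [e1]; exact hpZ.neg
    · rw [e2]; exact hmZ.neg
end

section
/- Every positive integer n satisfying σ₂(n) − n² = 3n is of the form n = F_{2k−1} · F_{2k+1} for some integer k ≥ 1, where both F_{2k−1} and F_{2k+1} are prime numbers. -/
/-!
Writing `n = p m` with `p` the least prime factor of `n`, the proper divisor `m` contributes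
`m²` to `σ₂(n) - n² = 3n = 3pm`, so `m ≤ 3p`. This rules out `m = 1`, `m = p` and, since a
composite `m` is at least `p²`, composite `m` (leaving only `n = 8, 12, 27` to check), so
`n = pq` with primes `p < q`. Then `σ₂(n) = (p² + 1)(q² + 1)` turns the hypothesis into the
Markov-type equation `p² + q² + 1 = 3pq`, whose solutions are consecutive odd-indexed Fibonacci
numbers: Vieta jumping `(p, q) ↦ (3p - q, p)` descends to `(1, 2)`.
-/

open ArithmeticFunction
open scoped ArithmeticFunction.sigma

namespace Nat

theorem fib_add_four_add_fib (n : ℕ) : fib (n + 4) + fib n = 3 * fib (n + 2) := by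
  have h₄ : fib (n + 4) = fib (n + 2) + fib (n + 3) := fib_add_two
  have h₃ : fib (n + 3) = fib (n + 1) + fib (n + 2) := fib_add_two
  have h₂ : fib (n + 2) = fib n + fib (n + 1) := fib_add_two
  omega

theorem eq_fib_of_sq_add_sq_add_one_eq {x y : ℕ} (hxy : x ≤ y)
    (heq : x ^ 2 + y ^ 2 + 1 = 3 * x * y) :
    (x = 1 ∧ y = 1) ∨ ∃ k, 1 ≤ k ∧ x = fib (2 * k - 1) ∧ y = fib (2 * k + 1) := by
  induction y using Nat.strong_induction_on generalizing x with
  | _ y ih =>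
    rcases hxy.eq_or_lt with rfl | hlt
    · left; constructor <;> nlinarith
    have hy : y < 3 * x := by nlinarith
    -- the other root `z` of `t² - 3xt + x² + 1` is again a solution, with `z ≤ x`
    set z := 3 * x - y
    have hyz : y + z = 3 * x := by omega
    have hzeq : z ^ 2 + x ^ 2 + 1 = 3 * z * x := by nlinarith
    have hzx : z ≤ x := by nlinarith
    right
    rcases ih x hlt hzx hzeq with ⟨-, rfl⟩ | ⟨k, hk, hzk, hxk⟩
    · exact ⟨1, le_rfl, rfl, show y = 2 by omega⟩
    · refine ⟨k + 1, by omega, by rwa [show 2 * (k + 1) - 1 = 2 * k + 1 by omega], ?_⟩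
      have h := fib_add_four_add_fib (2 * k - 1)
      rw [show 2 * k - 1 + 4 = 2 * (k + 1) + 1 by omega,
        show 2 * k - 1 + 2 = 2 * k + 1 by omega] at h
      omega

end Nat

theorem sigma_two_prime {p : ℕ} (hp : p.Prime) : σ 2 p = p ^ 2 + 1 := by
  simpa [Finset.sum_range_succ, add_comm] using sigma_apply_prime_pow (k := 2) (i := 1) hp

theorem sigma_two_prime_sq {p : ℕ} (hp : p.Prime) : σ 2 (p ^ 2) = p ^ 4 + p ^ 2 + 1 := by
  rw [sigma_apply_prime_pow hp, Finset.sum_range_succ, Finset.sum_range_succ,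
    Finset.sum_range_one]
  ring

theorem sigma_two_mul_primes {p q : ℕ} (hp : p.Prime) (hq : q.Prime) (hpq : p ≠ q) :
    σ 2 (p * q) = (p ^ 2 + 1) * (q ^ 2 + 1) := by
  rw [isMultiplicative_sigma.map_mul_of_coprime ((Nat.coprime_primes hp hq).mpr hpq),
    sigma_two_prime hp, sigma_two_prime hq]

theorem sq_add_sq_le_sigma_two {n d : ℕ} (hn : n ≠ 0) (hd : d ∣ n) (hdn : d ≠ n) :
    n ^ 2 + d ^ 2 ≤ σ 2 n := by
  rw [sigma_apply, ← Finset.sum_pair (f := (· ^ 2)) hdn.symm]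
  refine Finset.sum_le_sum_of_subset (Finset.insert_subset_iff.mpr ⟨?_, ?_⟩)
  · exact Nat.mem_divisors_self n hn
  · simpa [Finset.singleton_subset_iff] using ⟨hd, hn⟩

theorem exists_primes_of_sigma_two_eq {n : ℕ} (hn : 0 < n) (hσ : σ 2 n = n ^ 2 + 3 * n) :
    ∃ p q, p.Prime ∧ q.Prime ∧ p < q ∧ n = p * q := by
  have hn1 : n ≠ 1 := by rintro rfl; simp at hσ
  have hp : n.minFac.Prime := Nat.minFac_prime hn1
  have hp_le : ∀ d, 2 ≤ d → d ∣ n → n.minFac ≤ d := fun d => Nat.minFac_le_of_dvd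
  obtain ⟨m, hnm⟩ : n.minFac ∣ n := Nat.minFac_dvd n
  generalize n.minFac = p at hp hp_le hnm
  subst hnm
  have hm0 : 0 < m := Nat.pos_of_mul_pos_left hn
  have hm : m ≠ 1 := by
    rintro rfl
    rw [mul_one, sigma_two_prime hp] at hσ
    nlinarith [hp.two_le]
  have hm3p : m ≤ 3 * p := by
    have hmn : m ≠ p * m := by nlinarith [hp.two_le]
    nlinarith [sq_add_sq_le_sigma_two hn.ne' (Dvd.intro_left p rfl) hmn]
  have hpr : p ≤ m.minFac :=
    hp_le _ (Nat.minFac_prime hm).two_le ((Nat.minFac_dvd m).mul_left p)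
  by_cases hmp : m.Prime
  · rcases (hpr.trans (Nat.minFac_le hm0)).eq_or_lt with rfl | hlt
    · rw [← sq, sigma_two_prime_sq hp] at hσ
      nlinarith [hp.two_le]
    · exact ⟨p, m, hp, hmp, hlt, rfl⟩
  · have hp2m : p ^ 2 ≤ m := (Nat.pow_le_pow_left hpr 2).trans (Nat.minFac_sq_le_self hm0 hmp)
    have hp3 : p ≤ 3 := by nlinarith
    have hp2 := hp.two_le
    interval_cases p <;> interval_cases m <;>
      first | exact absurd hσ (by decide) | exact absurd (by norm_num) hmp

theorem stmt_11 (n : ℕ) (hn : 0 < n)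
    (heq : ((ArithmeticFunction.sigma 2) n : ℤ) - (n : ℤ) ^ 2 = 3 * n) :
    ∃ k : ℕ, 1 ≤ k ∧ n = Nat.fib (2 * k - 1) * Nat.fib (2 * k + 1) ∧
      (Nat.fib (2 * k - 1)).Prime ∧ (Nat.fib (2 * k + 1)).Prime := by
  have hσ : σ 2 n = n ^ 2 + 3 * n := by zify; linarith
  obtain ⟨p, q, hp, hq, hpq, rfl⟩ := exists_primes_of_sigma_two_eq hn hσ
  have hmarkov : p ^ 2 + q ^ 2 + 1 = 3 * p * q := by
    rw [sigma_two_mul_primes hp hq hpq.ne] at hσ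
    nlinarith
  rcases Nat.eq_fib_of_sq_add_sq_add_one_eq hpq.le hmarkov with
    ⟨rfl, -⟩ | ⟨k, hk, rfl, rfl⟩
  · exact absurd hp Nat.not_prime_one
  · exact ⟨k, hk, rfl, hp, hq⟩
end

section
/- There exist infinitely many primes p such that p + 2 is also prime if and only if there exist infinitely many positive integers n satisfying σ₂(n) − n² = 2n + 5. -/
open ArithmeticFunction Finset

lemma sigma2_prime {p : ℕ} (hp : p.Prime) : ArithmeticFunction.sigma 2 p = 1 + p ^ 2 := by
  have := ArithmeticFunction.sigma_apply_prime_pow (k := 2) (i := 1) hp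
  simpa [Finset.sum_range_succ] using this

lemma sigma2_prime_sq {p : ℕ} (hp : p.Prime) :
    ArithmeticFunction.sigma 2 (p ^ 2) = 1 + p ^ 2 + p ^ 4 := by
  have := ArithmeticFunction.sigma_apply_prime_pow (k := 2) (i := 2) hp
  simp [Finset.sum_range_succ] at this
  omega

lemma sigma2_mul {p q : ℕ} (hp : p.Prime) (hq : q.Prime) (hne : p ≠ q) :
    ArithmeticFunction.sigma 2 (p * q) = (1 + p ^ 2) * (1 + q ^ 2) := by
  rw [ArithmeticFunction.isMultiplicative_sigma.map_mul_of_coprime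
    ((Nat.coprime_primes hp hq).mpr hne), sigma2_prime hp, sigma2_prime hq]

lemma key (n : ℕ) (hne8 : n ≠ 8)
    (h : ArithmeticFunction.sigma 2 n = n ^ 2 + 2 * n + 5) :
    n.minFac.Prime ∧ (n.minFac + 2).Prime ∧ n = n.minFac * (n.minFac + 2) := by
  have hn0 : n ≠ 0 := by rintro rfl; simp at h
  have hn1 : n ≠ 1 := by
    rintro rfl
    simp [ArithmeticFunction.sigma_apply, Nat.divisors_one] at h
  have hp : n.minFac.Prime := Nat.minFac_prime hn1
  set p := n.minFac with hpdef
  obtain ⟨m, hnm⟩ : ∃ m, n = p * m := Nat.minFac_dvd n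
  have hp2 := hp.two_le
  have hnp : ¬ n.Prime := by
    intro hnpr
    rw [sigma2_prime hnpr] at h
    linarith
  have hm1 : m ≠ 1 := by rintro rfl; rw [mul_one] at hnm; exact hnp (hnm ▸ hp)
  have hm0 : m ≠ 0 := by rintro rfl; rw [mul_zero] at hnm; exact hn0 hnm
  have hm2 : 2 ≤ m := by omega
  have hmn : m ∣ n := ⟨p, by rw [hnm]; ring⟩
  have hmltn : m < n := by rw [hnm]; nlinarith
  have hsub : ({1, m, n} : Finset ℕ) ⊆ n.divisors := by
    intro d hd
    simp only [Finset.mem_insert, Finset.mem_singleton] at hd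
    rcases hd with rfl | rfl | rfl
    · exact Nat.one_mem_divisors.mpr hn0
    · exact Nat.mem_divisors.mpr ⟨hmn, hn0⟩
    · exact Nat.mem_divisors.mpr ⟨dvd_rfl, hn0⟩
  have hsum : 1 + m ^ 2 + n ^ 2 ≤ ArithmeticFunction.sigma 2 n := by
    rw [ArithmeticFunction.sigma_apply]
    calc 1 + m ^ 2 + n ^ 2 = ∑ d ∈ ({1, m, n} : Finset ℕ), d ^ 2 := by
          rw [Finset.sum_insert (by simp; omega), Finset.sum_insert (by simp; omega),
            Finset.sum_singleton]
          ring
      _ ≤ ∑ d ∈ n.divisors, d ^ 2 := Finset.sum_le_sum_of_subset hsub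
  have hm2n : m ^ 2 ≤ 2 * n + 4 := by omega
  have hmmf : (m.minFac).Prime := Nat.minFac_prime hm1
  have hpmf : p ≤ m.minFac := Nat.minFac_le_of_dvd hmmf.two_le ((Nat.minFac_dvd m).trans hmn)
  have hple : p ≤ m := hpmf.trans (Nat.minFac_le (by omega))
  have hm2p : m ≤ 2 * p := by
    by_contra hcon
    push_neg at hcon
    have h1 : (2 * p + 1) * m ≤ m * m := Nat.mul_le_mul_right m (by omega)
    have h2 : m * m = m ^ 2 := by ring
    have h3 : 2 * n = 2 * p * m := by rw [hnm]; ring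
    linarith
  have hmprime : m.Prime := by
    by_contra hmnp
    have hsq : m.minFac ^ 2 ≤ m := Nat.minFac_sq_le_self (by omega) hmnp
    have hpsq : p ^ 2 ≤ m := le_trans (Nat.pow_le_pow_left hpmf 2) hsq
    have hple2 : p ≤ 2 := by nlinarith
    have hpp : p = 2 := by omega
    have hm4 : 4 ≤ m := by nlinarith
    have hm4' : m = 4 := by omega
    apply hne8
    rw [hnm, hpp, hm4']
  rcases eq_or_lt_of_le hple with heq | hlt
  · exfalso
    have hn : n = p ^ 2 := by rw [hnm, ← heq]; ring
    rw [hn, sigma2_prime_sq hp] at h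
    have e1 : (p ^ 2) ^ 2 = p ^ 4 := by ring
    nlinarith
  · have hsig : ArithmeticFunction.sigma 2 n = (1 + p ^ 2) * (1 + m ^ 2) := by
      rw [hnm]; exact sigma2_mul hp hmprime (by omega)
    rw [hsig, hnm] at h
    have e1 : (1 + p ^ 2) * (1 + m ^ 2) = 1 + p ^ 2 + m ^ 2 + p ^ 2 * m ^ 2 := by ring
    have e2 : (p * m) ^ 2 = p ^ 2 * m ^ 2 := by ring
    have hkey : p ^ 2 + m ^ 2 = 2 * (p * m) + 4 := by linarith
    obtain ⟨d, rfl⟩ : ∃ d, m = p + d := ⟨m - p, by omega⟩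
    have e3 : (p + d) ^ 2 = p ^ 2 + 2 * (p * d) + d ^ 2 := by ring
    have e4 : 2 * (p * (p + d)) = 2 * p ^ 2 + 2 * (p * d) := by ring
    have hd : d ^ 2 = 4 := by linarith
    have hd3 : d < 3 := by nlinarith
    have hd2 : d = 2 := by interval_cases d <;> first | rfl | (exfalso; norm_num at hd)
    subst hd2
    exact ⟨hp, hmprime, hnm⟩

theorem stmt_12 :
    {p : ℕ | p.Prime ∧ (p + 2).Prime}.Infinite ↔
    {n : ℕ | 0 < n ∧
      ((ArithmeticFunction.sigma 2) n : ℤ) - (n : ℤ) ^ 2 = 2 * n + 5}.Infinite := by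
  constructor
  · intro hA
    have himg := hA.image (f := fun p => p * (p + 2)) ?_
    · refine himg.mono ?_
      rintro x ⟨p, ⟨hp, hp2⟩, rfl⟩
      refine ⟨Nat.mul_pos hp.pos (by omega), ?_⟩
      have hs : ArithmeticFunction.sigma 2 (p * (p + 2)) = (1 + p ^ 2) * (1 + (p + 2) ^ 2) :=
        sigma2_mul hp hp2 (by omega)
      rw [hs]
      push_cast
      ring
    · intro a _ b _ hab
      simp only at hab
      rcases lt_trichotomy a b with hlt | heq | hgt
      · exfalso; nlinarith
      · exact heq
      · exfalso; nlinarith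
  · intro hB
    have hB' := hB.diff (Set.finite_singleton 8)
    have himg := hB'.image (f := Nat.minFac) ?_
    · refine himg.mono ?_
      rintro x ⟨n, ⟨⟨hn0, heq⟩, hne8⟩, rfl⟩
      have hnat : ArithmeticFunction.sigma 2 n = n ^ 2 + 2 * n + 5 := by
        have : ((ArithmeticFunction.sigma 2 n : ℕ) : ℤ) = (n : ℤ) ^ 2 + 2 * n + 5 := by linarith
        exact_mod_cast this
      obtain ⟨h1, h2, _⟩ := key n (by simpa using hne8) hnat
      exact ⟨h1, h2⟩
    · intro a ha b hb hab
      obtain ⟨⟨ha0, haeq⟩, ha8⟩ := ha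
      obtain ⟨⟨hb0, hbeq⟩, hb8⟩ := hb
      have hanat : ArithmeticFunction.sigma 2 a = a ^ 2 + 2 * a + 5 := by
        have : ((ArithmeticFunction.sigma 2 a : ℕ) : ℤ) = (a : ℤ) ^ 2 + 2 * a + 5 := by linarith
        exact_mod_cast this
      have hbnat : ArithmeticFunction.sigma 2 b = b ^ 2 + 2 * b + 5 := by
        have : ((ArithmeticFunction.sigma 2 b : ℕ) : ℤ) = (b : ℤ) ^ 2 + 2 * b + 5 := by linarith
        exact_mod_cast this
      obtain ⟨_, _, ha'⟩ := key a (by simpa using ha8) hanat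
      obtain ⟨_, _, hb'⟩ := key b (by simpa using hb8) hbnat
      rw [ha', hb', hab]
end
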